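/- Let g be a complex semisimple Lie algebra with Cartan subalgebra h, λ ∈ h_ℝ*, J ⊆ J_λ, and M(λ,J) the corresponding generalized Verma module. Then conv_ℝ(wt M(λ,J)) = conv_ℝ(wt U(m_J)·m_λ) − cone_ℝ(Φ⁺ \ Φ_J⁺), where the subtraction is Minkowski difference A − C = {a − c : a ∈ A, c ∈ C}. In particular conv_ℝ(wt M(λ,J)) is a W_J-invariant convex polyhedron. -/

import Mathlib

open scoped BigOperators RealInnerProductSpace

noncomputable section

variable {n : ℕ}

/-- Ambient Euclidean space, modelling the real span `h_ℝ*` of the roots. -/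
abbrev Evec (n : ℕ) := EuclideanSpace ℝ (Fin n)

/-- `Q_J⁺`: the `ℤ₊`-span of the simple roots `{α_j : j ∈ J}`. -/
def Qplus (α : Fin n → Evec n) (J : Set (Fin n)) : Set (Evec n) :=
  { v | ∃ c : Fin n → ℕ, (∀ i, i ∉ J → c i = 0) ∧ v = ∑ i, (c i : ℝ) • α i }

/-- The real cone generated by a set. -/
def coneR (S : Set (Evec n)) : Set (Evec n) :=
  { v | ∃ (k : ℕ) (r : Fin k → ℝ) (x : Fin k → Evec n),
      (∀ j, 0 ≤ r j) ∧ (∀ j, x j ∈ S) ∧ v = ∑ j, r j • x j }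

/-- `ℤ₊`-linear combinations of elements of `S`. -/
def ZplusComb (S : Set (Evec n)) : Set (Evec n) :=
  { v | ∃ c : Evec n →₀ ℕ, ↑c.support ⊆ S ∧ v = c.sum fun x m => (m : ℝ) • x }

/-- The reflection in the hyperplane orthogonal to `v`. -/
def reflAt (v x : Evec n) : Evec n := x - (2 * ⟪x, v⟫ / ⟪v, v⟫) • v

/-- The simple reflections `s_j`, `j ∈ J`, realised as linear automorphisms. -/
def reflSet (α : Fin n → Evec n) (J : Set (Fin n)) : Set (Evec n ≃ₗ[ℝ] Evec n) :=
  { w | ∃ j ∈ J, ∀ x, w x = reflAt (α j) x }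

/-- The parabolic subgroup `W_J` of the Weyl group, generated by the simple
reflections `s_j`, `j ∈ J`. -/
def WeylGrp (α : Fin n → Evec n) (J : Set (Fin n)) : Subgroup (Evec n ≃ₗ[ℝ] Evec n) :=
  Subgroup.closure (reflSet α J)

/-- `P` is a polyhedron: a finite intersection of affine half-spaces. -/
def IsPolyhedron (P : Set (Evec n)) : Prop :=
  ∃ (k : ℕ) (v : Fin k → Evec n) (c : Fin k → ℝ),
    P = {u | ∀ j, ⟪v j, u⟫ ≤ c j}

/-- `Fc` is a face of `P`: `Fc = P` or the intersection of `P` with a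
supporting hyperplane. -/
def IsFaceOf (P Fc : Set (Evec n)) : Prop :=
  Fc = P ∨ ∃ v w : Evec n,
    (∀ u ∈ P, 0 ≤ ⟪v, u - w⟫) ∧
    (P ∩ {u | ⟪v, u - w⟫ = 0}).Nonempty ∧
    Fc = P ∩ {u | ⟪v, u - w⟫ = 0}


/- ### Auxiliary development: Minkowski–Weyl machinery ### -/

def coneSpan {m : ℕ} (d : Fin m → Evec n) : Set (Evec n) :=
  {u | ∃ r : Fin m → ℝ, (∀ i, 0 ≤ r i) ∧ u = ∑ i, r i • d i}

lemma coneSpan_zero {m : ℕ} (d : Fin m → Evec n) : (0:Evec n) ∈ coneSpan d :=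
  ⟨fun _ => 0, fun _ => le_refl 0, by simp⟩

lemma coneSpan_smul {m : ℕ} {d : Fin m → Evec n} {t : ℝ} (ht : 0 ≤ t) {v : Evec n}
    (hv : v ∈ coneSpan d) : t • v ∈ coneSpan d := by
  obtain ⟨r, hr, rfl⟩ := hv
  exact ⟨fun i => t * r i, fun i => mul_nonneg ht (hr i), by
    rw [Finset.smul_sum]; exact Finset.sum_congr rfl fun i _ => (mul_smul _ _ _).symm⟩

lemma coneSpan_add {m : ℕ} {d : Fin m → Evec n} {v w : Evec n}
    (hv : v ∈ coneSpan d) (hw : w ∈ coneSpan d) : v + w ∈ coneSpan d := by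
  obtain ⟨r, hr, rfl⟩ := hv
  obtain ⟨r', hr', rfl⟩ := hw
  exact ⟨fun i => r i + r' i, fun i => add_nonneg (hr i) (hr' i), by
    rw [← Finset.sum_add_distrib]; exact Finset.sum_congr rfl fun i _ => (add_smul _ _ _).symm⟩

/-- reindexing an H-representation by `Fin k` -/
lemma exists_fin_rep {ι : Type} [Fintype ι] (w : ι → Evec n) (c : ι → ℝ) :
    ∃ (k : ℕ) (w' : Fin k → Evec n) (c' : Fin k → ℝ),
      ∀ u : Evec n, (∀ j, ⟪w' j, u⟫ ≤ c' j) ↔ (∀ j, ⟪w j, u⟫ ≤ c j) := by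
  refine ⟨Fintype.card ι, w ∘ (Fintype.equivFin ι).symm, c ∘ (Fintype.equivFin ι).symm, fun u => ?_⟩
  constructor
  · intro h i; simpa using h (Fintype.equivFin ι i)
  · intro h j; exact h _

lemma exists_fin_rep0 {ι : Type} [Fintype ι] (w : ι → Evec n) :
    ∃ (k : ℕ) (w' : Fin k → Evec n),
      ∀ u : Evec n, (∀ j, ⟪w' j, u⟫ ≤ 0) ↔ (∀ j, ⟪w j, u⟫ ≤ 0) := by
  refine ⟨Fintype.card ι, w ∘ (Fintype.equivFin ι).symm, fun u => ?_⟩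
  constructor
  · intro h i; simpa using h (Fintype.equivFin ι i)
  · intro h j; exact h _

/-- Weyl: a finitely generated cone is (homogeneous) polyhedral. -/
lemma cone_polyhedral : ∀ {m : ℕ} (d : Fin m → Evec n),
    ∃ (k : ℕ) (w : Fin k → Evec n), {u : Evec n | ∀ j, ⟪w j, u⟫ ≤ 0} = coneSpan d := by
  intro m
  induction m with
  | zero =>
    intro d
    refine ⟨2 * n, fun j => if h : (j : ℕ) < n then EuclideanSpace.single ⟨j, h⟩ (1:ℝ)
      else -EuclideanSpace.single ⟨(j : ℕ) - n, by omega⟩ (1:ℝ), ?_⟩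
    ext u
    simp only [Set.mem_setOf_eq, coneSpan, Finset.univ_eq_empty, Finset.sum_empty]
    constructor
    · intro h
      have hu : u = 0 := by
        ext i
        have h1 := h ⟨i, by omega⟩
        have h2 := h ⟨(i : ℕ) + n, by omega⟩
        simp only [show (((⟨(i:ℕ), by omega⟩ : Fin (2*n)) : ℕ)) = (i:ℕ) from rfl] at h1 h2
        rw [dif_pos (by omega : (i:ℕ) < n)] at h1
        rw [dif_neg (by omega : ¬ ((i:ℕ) + n < n))] at h2
        simp only [inner_neg_left, neg_nonpos] at h2
        have e1 : (⟨(i:ℕ), i.isLt⟩ : Fin n) = i := rfl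
        have key1 : ⟪EuclideanSpace.single i (1:ℝ), u⟫ = u i := by
          rw [EuclideanSpace.inner_single_left]; simp
        have e2 : (⟨(i:ℕ) + n - n, by omega⟩ : Fin n) = i := by ext; simp
        rw [show (⟨(i:ℕ), by omega⟩ : Fin n) = i from rfl] at h1
        rw [e2] at h2
        rw [key1] at h1 h2
        simpa using le_antisymm h1 h2
      exact ⟨fun i => 0, fun i => le_refl 0, by simp [hu]⟩
    · rintro ⟨r, -, rfl⟩ j
      simp
  | succ m ih =>
    intro d
    obtain ⟨k, w, hw⟩ := ih (fun i : Fin m => d i.succ)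
    set x : Evec n := d 0 with hx
    set a : Fin k → ℝ := fun j => ⟪w j, x⟫ with ha
    set row : Fin k ⊕ (Fin k × Fin k) → Evec n := fun q =>
      Sum.rec (fun j => if a j ≤ 0 then w j else 0)
        (fun p => if 0 < a p.1 ∧ a p.2 < 0 then a p.1 • w p.2 - a p.2 • w p.1 else 0) q with hrow
    obtain ⟨k', w', hrep⟩ := exists_fin_rep0 (n := n) row
    refine ⟨k', w', ?_⟩
    have key : {u : Evec n | ∀ q, ⟪row q, u⟫ ≤ 0} = coneSpan d := by
      ext u
      simp only [Set.mem_setOf_eq]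
      constructor
      · intro h
        -- Fourier–Motzkin: reconstruct the coefficient t
        classical
        set T : Finset ℝ := insert (0:ℝ)
          ((Finset.univ.filter (fun i => 0 < a i)).image (fun i => ⟪w i, u⟫ / a i)) with hT
        have hTne : T.Nonempty := ⟨0, Finset.mem_insert_self _ _⟩
        set t : ℝ := T.max' hTne with htdef
        have ht0 : 0 ≤ t := Finset.le_max' T 0 (Finset.mem_insert_self _ _)
        have htge : ∀ i, 0 < a i → ⟪w i, u⟫ / a i ≤ t := fun i hi =>
          Finset.le_max' T _ (Finset.mem_insert_of_mem
            (Finset.mem_image_of_mem _ (Finset.mem_filter.2 ⟨Finset.mem_univ _, hi⟩)))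
        have htmem : t = 0 ∨ ∃ i, 0 < a i ∧ t = ⟪w i, u⟫ / a i := by
          rcases Finset.mem_insert.1 (T.max'_mem hTne) with h0 | hm
          · exact Or.inl h0
          · obtain ⟨i, hi, hieq⟩ := Finset.mem_image.1 hm
            exact Or.inr ⟨i, (Finset.mem_filter.1 hi).2, hieq.symm⟩
        have hc : ∀ j, ⟪w j, u - t • x⟫ ≤ 0 := by
          intro j
          rw [inner_sub_right, real_inner_smul_right]
          rcases lt_or_ge 0 (a j) with haj | haj
          · have := htge j haj
            rw [div_le_iff₀ haj] at this
            linarith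
          · have hqj : ⟪w j, u⟫ ≤ 0 := by
              have := h (Sum.inl j)
              simpa [hrow, if_pos haj] using this
            rcases htmem with h0 | ⟨i, hi, hieq⟩
            · rw [h0]; simpa using hqj
            · rcases eq_or_lt_of_le haj with haj0 | hajneg
              · have e : ⟪w j, x⟫ = (0:ℝ) := haj0
                rw [e]; simpa using hqj
              · have hpair := h (Sum.inr (i, j))
                have : ⟪a i • w j - a j • w i, u⟫ ≤ 0 := by
                  simpa [hrow, if_pos (And.intro hi hajneg)] using hpair
                rw [inner_sub_left, real_inner_smul_left, real_inner_smul_left] at this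
                rw [hieq, sub_nonpos, div_mul_eq_mul_div, le_div_iff₀ hi]
                linarith
        have hcmem : u - t • x ∈ coneSpan (fun i : Fin m => d i.succ) := by
          rw [← hw]; exact hc
        obtain ⟨r, hr, hreq⟩ := hcmem
        refine ⟨Fin.cases t r, fun i => ?_, ?_⟩
        · induction i using Fin.cases with
          | zero => simpa using ht0
          | succ i => simpa using hr i
        · rw [Fin.sum_univ_succ]
          simp only [Fin.cases_zero, Fin.cases_succ]
          rw [← hreq, ← hx]
          abel
      · rintro ⟨r, hr, rfl⟩ q
        have hcm : (∑ i : Fin m, r i.succ • d i.succ) ∈ coneSpan (fun i : Fin m => d i.succ) :=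
          ⟨fun i => r i.succ, fun i => hr _, rfl⟩
        rw [← hw] at hcm
        have hsum : ∑ i : Fin (m+1), r i • d i
            = (∑ i : Fin m, r i.succ • d i.succ) + r 0 • x := by
          rw [Fin.sum_univ_succ]; abel
        rw [hsum]
        set c : Evec n := ∑ i : Fin m, r i.succ • d i.succ with hcdef
        have hr0 : 0 ≤ r 0 := hr 0
        rcases q with j | ⟨i, j⟩
        · simp only [hrow]
          by_cases haj : a j ≤ 0
          · rw [if_pos haj, inner_add_right, real_inner_smul_right]
            have h1 : ⟪w j, c⟫ ≤ 0 := hcm j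
            nlinarith
          · rw [if_neg haj]; simp
        · simp only [hrow]
          by_cases hij : 0 < a i ∧ a j < 0
          · rw [if_pos hij, inner_sub_left, real_inner_smul_left, real_inner_smul_left,
              inner_add_right, inner_add_right, real_inner_smul_right, real_inner_smul_right]
            have h1 : ⟪w j, c⟫ ≤ 0 := hcm j
            have h2 : ⟪w i, c⟫ ≤ 0 := hcm i
            have e1 : ⟪w i, x⟫ = a i := rfl
            have e2 : ⟪w j, x⟫ = a j := rfl
            rw [e1, e2]
            nlinarith [hij.1, hij.2]
          · rw [if_neg hij]; simp
    rw [← key]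
    ext u
    simp only [Set.mem_setOf_eq]
    exact hrep u

lemma exists_fin_rep' {ι : Type} [Fintype ι] (w : ι → Evec n) (c : ι → ℝ) :
    ∃ (k : ℕ) (w' : Fin k → Evec n) (c' : Fin k → ℝ),
      (∀ u : Evec n, (∀ j, ⟪w' j, u⟫ ≤ c' j) ↔ (∀ j, ⟪w j, u⟫ ≤ c j)) ∧
      (∀ u : Evec n, (∀ j, ⟪w' j, u⟫ ≤ 0) ↔ (∀ j, ⟪w j, u⟫ ≤ 0)) := by
  refine ⟨Fintype.card ι, w ∘ (Fintype.equivFin ι).symm, c ∘ (Fintype.equivFin ι).symm,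
    fun u => ⟨fun h i => by simpa using h (Fintype.equivFin ι i), fun h j => h _⟩,
    fun u => ⟨fun h i => by simpa using h (Fintype.equivFin ι i), fun h j => h _⟩⟩

lemma polytope_add_cone_polyhedral (k₀ : ℕ) (w₀ : Fin k₀ → Evec n)
    {S : Finset (Evec n)} (hS : S.Nonempty) :
    ∃ (k : ℕ) (w : Fin k → Evec n) (c : Fin k → ℝ),
      ({u : Evec n | ∀ j, ⟪w j, u⟫ ≤ c j}
        = {u | ∃ a ∈ convexHull ℝ (S : Set (Evec n)), ∃ v, (∀ j, ⟪w₀ j, v⟫ ≤ 0) ∧ u = a + v}) ∧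
      ({v : Evec n | ∀ j, ⟪w j, v⟫ ≤ 0} = {v | ∀ j, ⟪w₀ j, v⟫ ≤ 0}) := by
  induction hS using Finset.Nonempty.cons_induction with
  | singleton s =>
    refine ⟨k₀, w₀, fun j => ⟪w₀ j, s⟫, ?_, rfl⟩
    ext u
    simp only [Set.mem_setOf_eq, Finset.coe_singleton, convexHull_singleton,
      Set.mem_singleton_iff, exists_eq_left]
    constructor
    · intro h
      refine ⟨u - s, fun j => ?_, by abel⟩
      rw [inner_sub_right]; linarith [h j]
    · rintro ⟨v, hv, rfl⟩ j
      rw [inner_add_right]; linarith [hv j]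
  | cons s S₀ hnotmem hS₀ ih =>
    obtain ⟨k, w, c, hset, hrec⟩ := ih
    classical
    set b : Fin k → ℝ := fun j => ⟪w j, s⟫ with hb
    set dd : Fin k → ℝ := fun j => b j - c j with hdd
    set rowv : Fin k ⊕ (Fin k × Fin k) → Evec n := fun q =>
      Sum.rec (fun j => w j)
        (fun p => if dd p.1 < 0 ∧ 0 < dd p.2 then dd p.2 • w p.1 - dd p.1 • w p.2 else 0) q
      with hrowv
    set rowc : Fin k ⊕ (Fin k × Fin k) → ℝ := fun q =>
      Sum.rec (fun j => max (b j) (c j))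
        (fun p => if dd p.1 < 0 ∧ 0 < dd p.2 then dd p.2 * b p.1 - dd p.1 * b p.2 else 0) q
      with hrowc
    obtain ⟨k', w', c', hrep, hrep0⟩ := exists_fin_rep' (n := n) rowv rowc
    have hsnew : (s : Evec n) ∈ convexHull ℝ (↑(Finset.cons s S₀ hnotmem) : Set (Evec n)) := by
      apply subset_convexHull
      simp
    have hhullmono : convexHull ℝ (↑S₀ : Set (Evec n))
        ⊆ convexHull ℝ (↑(Finset.cons s S₀ hnotmem) : Set (Evec n)) := by
      apply convexHull_mono
      intro y hy; simp only [Finset.coe_cons, Set.mem_insert_iff]; exact Or.inr hy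
    -- the main set-equality, by Fourier–Motzkin elimination of the segment parameter
    have key : {u : Evec n | ∀ q, ⟪rowv q, u⟫ ≤ rowc q}
        = {u | ∃ a ∈ convexHull ℝ (↑(Finset.cons s S₀ hnotmem) : Set (Evec n)),
            ∃ v, (∀ j, ⟪w₀ j, v⟫ ≤ 0) ∧ u = a + v} := by
      ext u
      simp only [Set.mem_setOf_eq]
      constructor
      · intro h
        have hinl : ∀ j, ⟪w j, u⟫ ≤ max (b j) (c j) := fun j => h (Sum.inl j)
        set L : Finset ℝ := insert (0:ℝ)
          ((Finset.univ.filter (fun i => dd i < 0)).image (fun i => (b i - ⟪w i, u⟫) / dd i))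
          with hL
        have hLne : L.Nonempty := ⟨0, Finset.mem_insert_self _ _⟩
        set t : ℝ := L.max' hLne with htdef
        have ht0 : 0 ≤ t := Finset.le_max' L 0 (Finset.mem_insert_self _ _)
        have htge : ∀ i, dd i < 0 → (b i - ⟪w i, u⟫) / dd i ≤ t := fun i hi =>
          Finset.le_max' L _ (Finset.mem_insert_of_mem
            (Finset.mem_image_of_mem _ (Finset.mem_filter.2 ⟨Finset.mem_univ _, hi⟩)))
        have htmem : t = 0 ∨ ∃ i, dd i < 0 ∧ t = (b i - ⟪w i, u⟫) / dd i := by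
          rcases Finset.mem_insert.1 (L.max'_mem hLne) with h0 | hm
          · exact Or.inl h0
          · obtain ⟨i, hi, hieq⟩ := Finset.mem_image.1 hm
            exact Or.inr ⟨i, (Finset.mem_filter.1 hi).2, hieq.symm⟩
        have hkey : ∀ j, ⟪w j, u⟫ ≤ b j - t * dd j := by
          intro j
          rcases lt_trichotomy (dd j) 0 with hdj | hdj | hdj
          · have := htge j hdj
            rw [div_le_iff_of_neg hdj] at this
            linarith
          · have hcb : c j = b j := by
              have : b j - c j = 0 := hdj
              linarith
            have hmj : max (b j) (c j) = b j := by rw [hcb, max_self]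
            rw [hdj, mul_zero, sub_zero]
            calc ⟪w j, u⟫ ≤ max (b j) (c j) := hinl j
              _ = b j := hmj
          · -- dd j > 0 : every lower bound is below the upper bound given by j
            have hup : t ≤ (b j - ⟪w j, u⟫) / dd j := by
              apply Finset.max'_le
              intro y hy
              rcases Finset.mem_insert.1 hy with rfl | hm
              · rw [le_div_iff₀ hdj, zero_mul, sub_nonneg]
                have hmj : max (b j) (c j) = b j := max_eq_left (by
                  have : (0:ℝ) < b j - c j := hdj
                  linarith)
                calc ⟪w j, u⟫ ≤ max (b j) (c j) := hinl j
                  _ = b j := hmj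
              · obtain ⟨i, hi, rfl⟩ := Finset.mem_image.1 hm
                have hdi : dd i < 0 := (Finset.mem_filter.1 hi).2
                have hpair := h (Sum.inr (i, j))
                simp only [hrowv, hrowc, if_pos (And.intro hdi hdj)] at hpair
                rw [inner_sub_left, real_inner_smul_left, real_inner_smul_left] at hpair
                rw [le_div_iff₀ hdj, div_mul_eq_mul_div, div_le_iff_of_neg hdi]
                nlinarith [hpair]
            rw [le_div_iff₀ hdj] at hup
            linarith
        rcases ht0.lt_or_eq with ht | ht
        · -- t > 0
          set p : Evec n := s + t⁻¹ • (u - s) with hp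
          have hpmem2 : ∀ j, ⟪w j, p⟫ ≤ c j := by
            intro j
            rw [hp, inner_add_right, real_inner_smul_right, inner_sub_right]
            have hbj : ⟪w j, s⟫ = b j := rfl
            rw [hbj]
            have h1 : ⟪w j, u⟫ - b j ≤ -(t * dd j) := by linarith [hkey j]
            have h2 : t⁻¹ * (⟪w j, u⟫ - b j) ≤ t⁻¹ * (-(t * dd j)) :=
              mul_le_mul_of_nonneg_left h1 (inv_nonneg.2 ht.le)
            have h3 : t⁻¹ * (-(t * dd j)) = -dd j := by
              field_simp
            have hcj : c j = b j - dd j := by simp [hdd]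
            rw [hcj]
            linarith
          have hpmem : p ∈ {u : Evec n | ∀ j, ⟪w j, u⟫ ≤ c j} := hpmem2
          rw [hset] at hpmem
          obtain ⟨a, ha, v₀, hv₀, hpeq⟩ := hpmem
          refine ⟨(1-t) • s + t • a, ?_, t • v₀, fun j => ?_, ?_⟩
          · exact (convex_convexHull ℝ _) hsnew (hhullmono ha) (by
              have h1 : t ≤ 1 := by
                apply Finset.max'_le
                intro y hy
                rcases Finset.mem_insert.1 hy with rfl | hm
                · norm_num
                · obtain ⟨i, hi, rfl⟩ := Finset.mem_image.1 hm
                  have hdi : dd i < 0 := (Finset.mem_filter.1 hi).2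
                  rw [div_le_iff_of_neg hdi, one_mul]
                  have hmi : max (b i) (c i) = c i := max_eq_right (by
                    have : b i - c i < 0 := hdi
                    linarith)
                  have := hinl i
                  rw [hmi] at this
                  have hci : dd i = b i - c i := rfl
                  linarith
              linarith) ht.le (by ring)
          · rw [real_inner_smul_right]
            nlinarith [hv₀ j, ht.le]
          · have h1 : t • (t⁻¹ • (u - s)) = u - s := by
              rw [smul_smul, mul_inv_cancel₀ (ne_of_gt ht), one_smul]
            have h2 : ((1-t) • s + t • a) + t • v₀ = u := by
              calc ((1-t) • s + t • a) + t • v₀ = (1-t) • s + t • (a + v₀) := by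
                    rw [smul_add]; abel
                _ = (1-t) • s + t • p := by rw [hpeq]
                _ = (1-t) • s + (t • s + (u - s)) := by rw [hp, smul_add, h1]
                _ = u := by module
            exact h2.symm
        · -- t = 0
          have hvw : ∀ j, ⟪w j, u - s⟫ ≤ 0 := by
            intro j
            rw [inner_sub_right]
            have hbj : ⟪w j, s⟫ = b j := rfl
            rw [hbj]
            have := hkey j
            rw [← ht, zero_mul, sub_zero] at this
            linarith
          have hmem : (u - s) ∈ {v : Evec n | ∀ j, ⟪w j, v⟫ ≤ 0} := hvw
          rw [hrec] at hmem
          exact ⟨s, hsnew, u - s, hmem, by abel⟩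
      · rintro ⟨a', ha', v, hv, rfl⟩
        rw [Finset.coe_cons, convexHull_insert (Finset.coe_nonempty.2 hS₀)] at ha'
        rw [mem_convexJoin] at ha'
        obtain ⟨x, hx, a, ha, hseg⟩ := ha'
        rw [Set.mem_singleton_iff] at hx
        rw [hx] at hseg
        obtain ⟨r₁, r₂, hr₁, hr₂, hsum, hcombo⟩ := hseg
        have hva : ∀ j, ⟪w j, a⟫ ≤ c j := by
          have : a ∈ {u : Evec n | ∃ a ∈ convexHull ℝ (↑S₀ : Set (Evec n)),
              ∃ v, (∀ j, ⟪w₀ j, v⟫ ≤ 0) ∧ u = a + v} :=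
            ⟨a, ha, 0, fun j => by simp, by simp⟩
          rw [← hset] at this
          exact this
        have hvw : ∀ j, ⟪w j, v⟫ ≤ 0 := by
          have : v ∈ {v : Evec n | ∀ j, ⟪w₀ j, v⟫ ≤ 0} := hv
          rw [← hrec] at this
          exact this
        have hexp : ∀ jj, ⟪w jj, a' + v⟫ = r₁ * b jj + r₂ * ⟪w jj, a⟫ + ⟪w jj, v⟫ := by
          intro jj
          rw [← hcombo, add_assoc, inner_add_right, inner_add_right, real_inner_smul_right,
            real_inner_smul_right]
          have hbj : ⟪w jj, s⟫ = b jj := rfl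
          rw [hbj]
          ring
        intro q
        rcases q with j | ⟨i, j⟩
        · have hgoal : ⟪rowv (Sum.inl j), a' + v⟫ = ⟪w j, a' + v⟫ := rfl
          have hcst : rowc (Sum.inl j) = max (b j) (c j) := rfl
          rw [hgoal, hcst, hexp j]
          have h1 : r₁ * b j ≤ r₁ * max (b j) (c j) :=
            mul_le_mul_of_nonneg_left (le_max_left _ _) hr₁
          have h2 : r₂ * c j ≤ r₂ * max (b j) (c j) :=
            mul_le_mul_of_nonneg_left (le_max_right _ _) hr₂
          have h3 : r₂ * ⟪w j, a⟫ ≤ r₂ * c j :=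
            mul_le_mul_of_nonneg_left (hva j) hr₂
          have h4 : r₁ * max (b j) (c j) + r₂ * max (b j) (c j) = max (b j) (c j) := by
            rw [← add_mul, hsum, one_mul]
          linarith [hvw j]
        · by_cases hij : dd i < 0 ∧ 0 < dd j
          · have hgoal : ⟪rowv (Sum.inr (i, j)), a' + v⟫
                = dd j * ⟪w i, a' + v⟫ - dd i * ⟪w j, a' + v⟫ := by
              simp only [hrowv, if_pos hij]
              rw [inner_sub_left, real_inner_smul_left, real_inner_smul_left]
            have hcst : rowc (Sum.inr (i, j)) = dd j * b i - dd i * b j := by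
              simp only [hrowc, if_pos hij]
            rw [hgoal, hcst, hexp i, hexp j]
            have hddi : dd i = b i - c i := rfl
            have hddj : dd j = b j - c j := rfl
            have hai : ⟪w i, a⟫ ≤ b i - dd i := by
              have h5 := hva i
              linarith [hddi]
            have haj : ⟪w j, a⟫ ≤ b j - dd j := by
              have h5 := hva j
              linarith [hddj]
            have hr1eq : r₁ = 1 - r₂ := by linarith
            rw [hr1eq]
            nlinarith [mul_nonneg (mul_nonneg hr₂ hij.2.le) (sub_nonneg.2 hai),
              mul_nonneg (mul_nonneg hr₂ (neg_nonneg.2 hij.1.le)) (sub_nonneg.2 haj),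
              mul_nonneg hij.2.le (neg_nonneg.2 (hvw i)),
              mul_nonneg (neg_nonneg.2 hij.1.le) (neg_nonneg.2 (hvw j))]
          · have hgoal : rowv (Sum.inr (i, j)) = 0 := by simp only [hrowv, if_neg hij]
            have hcst : rowc (Sum.inr (i, j)) = 0 := by simp only [hrowc, if_neg hij]
            rw [hgoal, hcst, inner_zero_left]
    -- the recession-cone equality
    have rec2 : {v : Evec n | ∀ q, ⟪rowv q, v⟫ ≤ 0} = {v | ∀ j, ⟪w₀ j, v⟫ ≤ 0} := by
      ext v
      simp only [Set.mem_setOf_eq]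
      constructor
      · intro h
        have hwv : v ∈ {v : Evec n | ∀ j, ⟪w j, v⟫ ≤ 0} := fun j => h (Sum.inl j)
        rw [hrec] at hwv
        exact hwv
      · intro h
        have hwv : ∀ j, ⟪w j, v⟫ ≤ 0 := by
          have : v ∈ {v : Evec n | ∀ j, ⟪w₀ j, v⟫ ≤ 0} := h
          rw [← hrec] at this
          exact this
        rintro (j | ⟨i, j⟩)
        · exact hwv j
        · by_cases hij : dd i < 0 ∧ 0 < dd j
          · have hgoal : ⟪rowv (Sum.inr (i, j)), v⟫
                = dd j * ⟪w i, v⟫ - dd i * ⟪w j, v⟫ := by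
              simp only [hrowv, if_pos hij]
              rw [inner_sub_left, real_inner_smul_left, real_inner_smul_left]
            rw [hgoal]
            nlinarith [mul_nonneg hij.2.le (neg_nonneg.2 (hwv i)),
              mul_nonneg (neg_nonneg.2 hij.1.le) (neg_nonneg.2 (hwv j))]
          · have hgoal : rowv (Sum.inr (i, j)) = 0 := by simp only [hrowv, if_neg hij]
            rw [hgoal, inner_zero_left]
    refine ⟨k', w', c', ?_, ?_⟩
    · calc {u : Evec n | ∀ j, ⟪w' j, u⟫ ≤ c' j}
          = {u : Evec n | ∀ q, ⟪rowv q, u⟫ ≤ rowc q} := Set.ext fun u => hrep u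
        _ = _ := key
    · calc {v : Evec n | ∀ j, ⟪w' j, v⟫ ≤ 0}
          = {v : Evec n | ∀ q, ⟪rowv q, v⟫ ≤ 0} := Set.ext fun v => hrep0 v
        _ = _ := rec2

lemma coneR_eq_coneSpan (D : Finset (Evec n)) :
    coneR (↑D) = coneSpan (fun i : Fin D.card => (↑(D.equivFin.symm i) : Evec n)) := by
  classical
  ext v
  constructor
  · rintro ⟨k, r, x, hr, hx, rfl⟩
    set d : Fin D.card → Evec n := fun i => (↑(D.equivFin.symm i) : Evec n) with hd
    set g : Fin k → Fin D.card := fun j => D.equivFin ⟨x j, hx j⟩ with hg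
    have hgx : ∀ j, d (g j) = x j := by
      intro j
      simp [hd, hg]
    refine ⟨fun i => ∑ j ∈ Finset.univ.filter (fun j => g j = i), r j,
      fun i => Finset.sum_nonneg fun j _ => hr j, ?_⟩
    rw [← Finset.sum_fiberwise Finset.univ g (fun j => r j • x j)]
    apply Finset.sum_congr rfl
    intro i _
    rw [Finset.sum_smul]
    apply Finset.sum_congr rfl
    intro j hj
    have : g j = i := (Finset.mem_filter.1 hj).2
    rw [← this, hgx j]
  · rintro ⟨r, hr, rfl⟩
    exact ⟨D.card, r, _, hr, fun j => (D.equivFin.symm j).2, rfl⟩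

lemma ZplusComb_subset_coneR (S : Set (Evec n)) : ZplusComb S ⊆ coneR S := by
  rintro v ⟨c, hsupp, rfl⟩
  refine ⟨c.support.card, fun j => ((c ↑(c.support.equivFin.symm j) : ℕ) : ℝ),
    fun j => ↑(c.support.equivFin.symm j), fun j => Nat.cast_nonneg _,
    fun j => hsupp (c.support.equivFin.symm j).2, ?_⟩
  rw [Finsupp.sum]
  rw [← Finset.sum_coe_sort c.support (fun x => ((c x : ℕ) : ℝ) • x)]
  exact (Equiv.sum_comp c.support.equivFin.symm
    (fun x : c.support => ((c ↑x : ℕ) : ℝ) • (x : Evec n))).symm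

lemma natComb_mem_ZplusComb {m : ℕ} (D : Set (Evec n)) (d : Fin m → Evec n)
    (hd : ∀ i, d i ∈ D) (r : Fin m → ℕ) :
    (∑ i, (r i : ℝ) • d i) ∈ ZplusComb D := by
  classical
  set F : Evec n → ℕ →+ Evec n := fun x =>
    { toFun := fun k => (k : ℝ) • x
      map_zero' := by simp
      map_add' := fun k₁ k₂ => by push_cast; rw [add_smul] } with hF
  set c : Evec n →₀ ℕ := ∑ i, Finsupp.single (d i) (r i) with hc
  refine ⟨c, ?_, ?_⟩
  · intro a ha
    rw [Finset.mem_coe] at ha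
    obtain ⟨i, -, hi⟩ := Finsupp.mem_support_finset_sum a ha
    have := Finsupp.support_single_subset hi
    rw [Finset.mem_singleton] at this
    rw [this]
    exact hd i
  · have h1 : Finsupp.liftAddHom F c = c.sum fun x k => (k : ℝ) • x := by
      rw [Finsupp.liftAddHom_apply]
      rfl
    rw [← h1, hc, map_sum]
    apply Finset.sum_congr rfl
    intro i _
    rw [Finsupp.liftAddHom_apply_single]
    rfl

lemma sub_natCone_mem_hull : ∀ {m : ℕ} (d : Fin m → Evec n) (W : Set (Evec n)) (s : Evec n),
    (∀ r : Fin m → ℕ, s - ∑ i, (r i : ℝ) • d i ∈ W) →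
    ∀ (r : Fin m → ℝ), (∀ i, 0 ≤ r i) → s - ∑ i, r i • d i ∈ convexHull ℝ W := by
  intro m
  induction m with
  | zero =>
    intro d W s hW r hr
    have := hW (fun _ => 0)
    simp only [Finset.univ_eq_empty, Finset.sum_empty, sub_zero] at this ⊢
    exact subset_convexHull ℝ W this
  | succ m ih =>
    intro d W s hW r hr
    have hWs : ∀ (x : Evec n) (N : ℕ), (∀ r' : Fin m → ℕ,
        (s - (N : ℝ) • d 0) - ∑ i : Fin m, (r' i : ℝ) • d i.succ ∈ W) := by
      intro x N r'
      have := hW (Fin.cons N r')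
      rw [Fin.sum_univ_succ] at this
      simp only [Fin.cons_zero, Fin.cons_succ] at this
      rw [← sub_sub] at this
      exact this
    set N : ℕ := ⌈r 0⌉₊ with hN
    have hr0N : r 0 ≤ (N : ℝ) := Nat.le_ceil _
    by_cases hN0 : (N : ℝ) = 0
    · have hr00 : r 0 = 0 := le_antisymm (le_of_le_of_eq hr0N hN0) (hr 0)
      have hA := ih (fun i => d i.succ) W s (by
        intro r'
        have := hWs 0 0 r'
        simpa using this) (fun i => r i.succ) (fun i => hr i.succ)
      rw [Fin.sum_univ_succ, hr00, zero_smul, zero_add]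
      exact hA
    · set lam : ℝ := r 0 / (N : ℝ) with hlam
      have hlam0 : 0 ≤ lam := div_nonneg (hr 0) (Nat.cast_nonneg _)
      have hlam1 : lam ≤ 1 := by
        rw [hlam, div_le_one (lt_of_le_of_ne (Nat.cast_nonneg _) (Ne.symm hN0))]
        exact hr0N
      have hA := ih (fun i => d i.succ) W (s - (N : ℝ) • d 0) (hWs 0 N)
        (fun i => r i.succ) (fun i => hr i.succ)
      have hB := ih (fun i => d i.succ) W s (by
        intro r'
        have := hWs 0 0 r'
        simpa using this) (fun i => r i.succ) (fun i => hr i.succ)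
      have hcancel : lam * (N : ℝ) = r 0 := div_mul_cancel₀ _ hN0
      have hkey : lam • ((s - (N : ℝ) • d 0) - ∑ i : Fin m, r i.succ • d i.succ)
          + (1 - lam) • (s - ∑ i : Fin m, r i.succ • d i.succ)
          = s - ∑ i : Fin (m+1), r i • d i := by
        rw [Fin.sum_univ_succ, ← hcancel]
        match_scalars <;> ring
      rw [← hkey]
      exact (convex_convexHull ℝ W) hA hB hlam0 (by linarith) (by ring)

lemma coneSpan_neg_iff {m : ℕ} (d : Fin m → Evec n) (v : Evec n) :
    v ∈ coneSpan (fun i => -d i) ↔ -v ∈ coneSpan d := by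
  constructor
  · rintro ⟨r, hr, rfl⟩
    exact ⟨r, hr, by simp⟩
  · rintro ⟨r, hr, h⟩
    refine ⟨r, hr, ?_⟩
    rw [← neg_neg v, h]
    simp

/-- The convex hull of the weights of a generalized Verma module `M(λ,J)` is
the Minkowski difference of the convex hull of the (finite) set of weights of
`U(m_J)·m_λ` and the real cone on `Φ⁺ \ Φ_J⁺`; in particular it is a
`W_J`-invariant convex polyhedron. -/
theorem gvm_convexHull_eq_minkowski_diff
    (α : Fin n → Evec n) (Φp ΦJp : Finset (Evec n)) (hJp : ΦJp ⊆ Φp)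
    (S : Finset (Evec n)) (hS : S.Nonempty)
    (wtM : Set (Evec n))
    -- `wt M(λ,J) = wt(U(m_J)m_λ) − ℤ₊-span(Φ⁺ \ Φ_J⁺)`:
    (hwt : wtM = {μ | ∃ s ∈ S, ∃ z ∈ ZplusComb ((Φp : Set (Evec n)) \ ↑ΦJp), μ = s - z})
    (J : Set (Fin n))
    -- `wt M(λ,J)` is `W_J`-invariant:
    (hinv : ∀ w ∈ WeylGrp α J, ⇑w '' wtM = wtM) :
    convexHull ℝ wtM =
      {x | ∃ a ∈ convexHull ℝ (S : Set (Evec n)),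
        ∃ c ∈ coneR ((Φp : Set (Evec n)) \ ↑ΦJp), x = a - c} ∧
    (∀ w ∈ WeylGrp α J, ⇑w '' convexHull ℝ wtM = convexHull ℝ wtM) ∧
    IsPolyhedron (convexHull ℝ wtM) := by
  classical
  subst hwt
  set wtM : Set (Evec n) :=
    {μ | ∃ s ∈ S, ∃ z ∈ ZplusComb ((Φp : Set (Evec n)) \ ↑ΦJp), μ = s - z} with hwtM
  set D : Finset (Evec n) := Φp \ ΦJp with hDdef
  have hDco : (↑D : Set (Evec n)) = (↑Φp : Set (Evec n)) \ ↑ΦJp := by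
    rw [hDdef, Finset.coe_sdiff]
  set d : Fin D.card → Evec n := fun i => (↑(D.equivFin.symm i) : Evec n) with hd
  have hcone : coneR ((↑Φp : Set (Evec n)) \ ↑ΦJp) = coneSpan d := by
    rw [← hDco]
    exact coneR_eq_coneSpan D
  have hdmem : ∀ i, d i ∈ (↑Φp : Set (Evec n)) \ ↑ΦJp := by
    intro i
    rw [← hDco]
    exact (D.equivFin.symm i).2
  set M : Set (Evec n) :=
    {x | ∃ a ∈ convexHull ℝ (S : Set (Evec n)), ∃ c ∈ coneSpan d, x = a - c} with hM
  -- `M` is convex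
  have hMconv : Convex ℝ M := by
    rintro x ⟨ax, hax, cx, hcx, rfl⟩ y ⟨ay, hay, cy, hcy, rfl⟩ p q hp hq hpq
    exact ⟨p • ax + q • ay, (convex_convexHull ℝ _) hax hay hp hq hpq,
      p • cx + q • cy, coneSpan_add (coneSpan_smul hp hcx) (coneSpan_smul hq hcy), by module⟩
  -- the convex hull of the weights is contained in `M`
  have hsub : convexHull ℝ wtM ⊆ M := by
    apply convexHull_min _ hMconv
    rintro μ ⟨s, hs, z, hz, rfl⟩
    refine ⟨s, subset_convexHull ℝ _ (Finset.mem_coe.2 hs), z, ?_, rfl⟩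
    rw [← hcone]
    exact ZplusComb_subset_coneR _ hz
  -- conversely, `M` is contained in the convex hull of the weights
  have hsup : M ⊆ convexHull ℝ wtM := by
    rintro x ⟨a, ha, cvec, ⟨r, hr, rfl⟩, rfl⟩
    set T : Set (Evec n) := {y | y - ∑ i, r i • d i ∈ convexHull ℝ wtM} with hT
    have hTconv : Convex ℝ T := by
      intro x hx y hy p q hp hq hpq
      have hxy : p • x + q • y - ∑ i, r i • d i
          = p • (x - ∑ i, r i • d i) + q • (y - ∑ i, r i • d i)
            + ((p + q) - 1) • (∑ i, r i • d i) := by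
        module
      rw [hpq] at hxy
      simp only [sub_self, zero_smul, add_zero] at hxy
      show p • x + q • y - ∑ i, r i • d i ∈ convexHull ℝ wtM
      rw [hxy]
      exact (convex_convexHull ℝ wtM) hx hy hp hq hpq
    have hST : (S : Set (Evec n)) ⊆ T := by
      intro s hs
      apply sub_natCone_mem_hull d wtM s _ r hr
      intro rn
      exact ⟨s, Finset.mem_coe.1 hs, ∑ i, (rn i : ℝ) • d i,
        natComb_mem_ZplusComb _ d hdmem rn, rfl⟩
    exact convexHull_min hST hTconv ha
  have hMeq : convexHull ℝ wtM = M := Set.Subset.antisymm hsub hsup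
  have hpart1 : convexHull ℝ wtM =
      {x | ∃ a ∈ convexHull ℝ (S : Set (Evec n)),
        ∃ c ∈ coneR ((Φp : Set (Evec n)) \ ↑ΦJp), x = a - c} := by
    rw [hcone]
    exact hMeq
  refine ⟨hpart1, ?_, ?_⟩
  · -- Weyl-group invariance
    intro w hw
    have h := (w : Evec n →ₗ[ℝ] Evec n).image_convexHull wtM
    simp only [LinearEquiv.coe_coe] at h
    rw [h, hinv w hw]
  · -- polyhedrality, via the Minkowski–Weyl machinery
    obtain ⟨k₀, w₀, hw₀⟩ := cone_polyhedral (fun i => -d i)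
    obtain ⟨k, w, c, hset, -⟩ := polytope_add_cone_polyhedral k₀ w₀ hS
    refine ⟨k, w, c, ?_⟩
    rw [hMeq, hset]
    ext u
    simp only [Set.mem_setOf_eq]
    constructor
    · rintro ⟨a, ha, cv, hcv, rfl⟩
      refine ⟨a, ha, -cv, ?_, by abel⟩
      have hmem : -cv ∈ coneSpan (fun i => -d i) := by
        rw [coneSpan_neg_iff]
        rw [neg_neg]
        exact hcv
      rw [← hw₀] at hmem
      exact hmem
    · rintro ⟨a, ha, v, hv, rfl⟩
      refine ⟨a, ha, -v, ?_, by abel⟩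
      have hmem : v ∈ coneSpan (fun i => -d i) := by
        rw [← hw₀]
        exact hv
      rw [coneSpan_neg_iff] at hmem
      exact hmem
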